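/- Let 2 ≤ c ≤ min{n,s}. Then the symbolic square of the star configuration ideal decomposes as I_{c,F}^{(2)} = I_{c−1,F} + I_{c,F}^2. -/

import Mathlib

/-!
Write `P(T) = ⟨F_i : i ∈ T⟩` and `I_e(U)` for the star ideal of the forms indexed by `U`. Since
any `c + 1` of the forms are a regular sequence in any order, `F_g` is a nonzerodivisor modulo
`P(A)` whenever `g ∉ A` and `|A| ≤ c`; by induction on `T` it is then also a nonzerodivisor
modulo `P(T)² + P(W)`, and `I_e(U) + P(W)` is cut out by the ideals `P(T) + P(W)`.

For `W` disjoint from `U` one shows that `x ∈ P(S)² + P(W)` for all `c`-subsets `S ⊆ U` implies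
`x ∈ I_{c-1}(U) + I_c(U)² + P(W)`, by induction on `c` and on `U = U' ∪ {j}`. Moving `j` into
`W`, the case `c - 1` writes `x ≡ w + ρ F_j` with `w ∈ I_{c-2}(U') + I_{c-1}(U')²`; cancelling
`F_j` gives `ρ ∈ I_{c-1}(U') + P(W ∪ {j})`, say `ρ ≡ θ + σ F_j` modulo `P(W)`, and cancelling
`F_j` once more shows that `σ` satisfies the hypothesis on `U'`, so induction on `U` applies to
`σ`. For `c = 1` one starts instead from `x ≡ (a F_j) F_j`.
-/

open MvPolynomial

/-- The star configuration ideal `I_{e,F} = ⋂_{|S| = e} ⟨F_i : i ∈ S⟩`. -/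
noncomputable def starIdeal {k : Type*} [Field k] {n s : ℕ}
    (F : Fin s → MvPolynomial (Fin (n + 1)) k) (e : ℕ) :
    Ideal (MvPolynomial (Fin (n + 1)) k) :=
  ⨅ (S : Finset (Fin s)) (_ : S.card = e), Ideal.span (F '' ↑S)

/-- The `m`-th symbolic power `I_{e,F}^{(m)} = ⋂_{|S| = e} ⟨F_i : i ∈ S⟩^m`. -/
noncomputable def starSymb {k : Type*} [Field k] {n s : ℕ}
    (F : Fin s → MvPolynomial (Fin (n + 1)) k) (e m : ℕ) :
    Ideal (MvPolynomial (Fin (n + 1)) k) :=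
  ⨅ (S : Finset (Fin s)) (_ : S.card = e), (Ideal.span (F '' ↑S)) ^ m

open Finset

namespace StarConfiguration

variable {R : Type*} [CommRing R] {ι : Type*}

def genIdeal (f : ι → R) (T : Finset ι) : Ideal R := Ideal.span (f '' T)

def starIdealOn (f : ι → R) (e : ℕ) (U : Finset ι) : Ideal R :=
  ⨅ (T : Finset ι) (_ : T ⊆ U) (_ : #T = e), genIdeal f T

def starSum (f : ι → R) (e : ℕ) (U : Finset ι) : Ideal R :=
  starIdealOn f e U ⊔ starIdealOn f (e + 1) U ^ 2

def IsRegularUpTo (f : ι → R) (k : ℕ) : Prop :=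
  ∀ A : Finset ι, #A < k → ∀ g ∉ A, ∀ z : R,
    z * f g ∈ genIdeal f A → z ∈ genIdeal f A

lemma sup_sq_le_sq_sup_mul (A B : Ideal R) : (B ⊔ A) ^ 2 ≤ A ^ 2 ⊔ (B ⊔ A) * B := by
  rw [sq, Ideal.mul_sup]
  refine sup_le le_sup_right ?_
  rw [Ideal.sup_mul, mul_comm B A, ← sq]
  exact sup_le (le_sup_of_le_right (Ideal.mul_mono_left le_sup_right)) le_sup_left

lemma mul_mem_sup_of_mem_sup {I I' K : Ideal R} {a y : R} (ha : a ∈ I ⊔ K)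
    (hI : ∀ b ∈ I, b * y ∈ I') : a * y ∈ I' ⊔ K := by
  obtain ⟨b, hb, c, hc, rfl⟩ := Submodule.mem_sup.1 ha
  rw [add_mul]
  exact add_mem (Ideal.mem_sup_left (hI b hb)) (Ideal.mem_sup_right (K.mul_mem_right y hc))

lemma mem_sup_mono_left {I I' K : Ideal R} {a : R} (h : I ≤ I') (ha : a ∈ I ⊔ K) :
    a ∈ I' ⊔ K :=
  sup_le_sup_right h K ha

variable {f : ι → R} {k e : ℕ} {T U W : Finset ι} {j : ι} {x : R}

@[simp] lemma genIdeal_empty : genIdeal f ∅ = ⊥ := by simp [genIdeal]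

lemma genIdeal_mono : Monotone (genIdeal f) := fun _ _ h =>
  Ideal.span_mono (Set.image_mono (coe_subset.2 h))

lemma genIdeal_singleton (j : ι) : genIdeal f {j} = Ideal.span {f j} := by simp [genIdeal]

lemma mem_genIdeal (h : j ∈ T) : f j ∈ genIdeal f T := Ideal.subset_span ⟨j, h, rfl⟩

lemma mem_starIdealOn : x ∈ starIdealOn f e U ↔ ∀ T ⊆ U, #T = e → x ∈ genIdeal f T := by
  simp [starIdealOn, Submodule.mem_iInf]

lemma starIdealOn_le_genIdeal (hT : T ⊆ U) (he : e ≤ #T) :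
    starIdealOn f e U ≤ genIdeal f T := by
  obtain ⟨T', hT', rfl⟩ := exists_subset_card_eq he
  exact fun x hx => genIdeal_mono hT' (mem_starIdealOn.1 hx T' (hT'.trans hT) rfl)

lemma starIdealOn_eq_top (h : #U < e) : starIdealOn f e U = ⊤ :=
  eq_top_iff.2 fun x _ => mem_starIdealOn.2 fun T hT hTe => absurd (card_le_card hT) (by omega)

lemma mul_mem_sq_sup_of_mem_sup {K : Ideal R} {a : R} (ha : a ∈ genIdeal f T ⊔ K)
    (hj : j ∈ T) : a * f j ∈ genIdeal f T ^ 2 ⊔ K :=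
  mul_mem_sup_of_mem_sup ha fun _ hb =>
    sq (genIdeal f T) ▸ Ideal.mul_mem_mul hb (mem_genIdeal hj)

theorem isRegularUpTo_of_isWeaklyRegular
    (h : ∀ L : List ι, L.Nodup → L.length ≤ k →
      RingTheory.Sequence.IsWeaklyRegular R (L.map f)) :
    IsRegularUpTo f k := by
  intro A hA g hg z hz
  have hreg := h (A.toList ++ [g]) (List.nodup_append.2 ⟨A.nodup_toList, List.nodup_singleton g,
    fun a ha b hb hab => hg (by simp_all)⟩) (by simp; omega)
  rw [List.map_append, List.map_singleton, RingTheory.Sequence.isWeaklyRegular_append_iff,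
    RingTheory.Sequence.isWeaklyRegular_singleton_iff] at hreg
  have hA : Ideal.ofList (A.toList.map f) • (⊤ : Ideal R) = genIdeal f A := by
    rw [Ideal.smul_eq_mul, Ideal.mul_top, Ideal.ofList, genIdeal]
    congr 1
    ext
    simp
  rw [← Submodule.Quotient.mk_eq_zero, ← hA] at hz ⊢
  refine hreg.2.right_eq_zero_of_smul ?_
  rw [← Submodule.Quotient.mk_smul]
  simpa [mul_comm] using hz

variable [DecidableEq ι]

lemma genIdeal_insert (j : ι) (T : Finset ι) :
    genIdeal f (insert j T) = Ideal.span {f j} ⊔ genIdeal f T := by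
  simp [genIdeal, Set.image_insert_eq, Ideal.span_insert]

lemma genIdeal_union (T W : Finset ι) : genIdeal f (T ∪ W) = genIdeal f T ⊔ genIdeal f W := by
  simp [genIdeal, Set.image_union]

lemma genIdeal_insert_sup (j : ι) (T W : Finset ι) :
    genIdeal f (insert j T) ⊔ genIdeal f W = genIdeal f T ⊔ genIdeal f (insert j W) := by
  rw [← genIdeal_union, ← genIdeal_union, insert_union, union_insert]

lemma mem_sup_genIdeal_insert_iff {I : Ideal R} :
    x ∈ I ⊔ genIdeal f (insert j W) ↔ ∃ r, x - r * f j ∈ I ⊔ genIdeal f W := by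
  rw [genIdeal_insert, sup_left_comm, Ideal.mem_span_singleton_sup]
  exact ⟨fun ⟨a, b, hb, hx⟩ => ⟨a, by rwa [← hx, add_sub_cancel_left]⟩,
    fun ⟨r, hr⟩ => ⟨r, _, hr, add_sub_cancel _ _⟩⟩

lemma exists_sub_mul_mem_of_mem_sq_insert
    (hx : x ∈ genIdeal f (insert j T) ^ 2 ⊔ genIdeal f W) :
    ∃ c ∈ genIdeal f (insert j T), x - c * f j ∈ genIdeal f T ^ 2 ⊔ genIdeal f W := by
  obtain ⟨y, hy, w, hw, rfl⟩ := Submodule.mem_sup.1 hx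
  rw [genIdeal_insert] at hy ⊢
  obtain ⟨a, ha, b, hb, rfl⟩ := Submodule.mem_sup.1 (sup_sq_le_sq_sup_mul _ _ hy)
  obtain ⟨c, hc, rfl⟩ := Ideal.mem_mul_span_singleton.1 hb
  refine ⟨c, hc, ?_⟩
  rw [add_sub_right_comm, add_sub_cancel_right]
  exact add_mem (Ideal.mem_sup_left ha) (Ideal.mem_sup_right hw)

lemma sq_genIdeal_insert_sup_le (j : ι) (T W : Finset ι) :
    genIdeal f (insert j T) ^ 2 ⊔ genIdeal f W ≤
      genIdeal f T ^ 2 ⊔ genIdeal f (insert j W) := by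
  intro x hx
  obtain ⟨c, -, hc⟩ := exists_sub_mul_mem_of_mem_sq_insert hx
  exact mem_sup_genIdeal_insert_iff.2 ⟨c, hc⟩

lemma starIdealOn_le_insert (j : ι) :
    starIdealOn f e U ≤ starIdealOn f (e + 1) (insert j U) := by
  refine fun x hx => mem_starIdealOn.2 fun T hT hTe => ?_
  refine genIdeal_mono (erase_subset j T) (starIdealOn_le_genIdeal (f := f) ?_ ?_ hx)
  · simpa [subset_insert_iff] using hT
  · have := pred_card_le_card_erase (s := T) (a := j); omega

lemma mul_mem_starIdealOn_insert {a : R} (ha : a ∈ starIdealOn f e U) :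
    a * f j ∈ starIdealOn f e (insert j U) := by
  refine mem_starIdealOn.2 fun T hT hTe => ?_
  by_cases hj : j ∈ T
  · exact Ideal.mul_mem_left _ _ (mem_genIdeal hj)
  · exact Ideal.mul_mem_right _ _
      (mem_starIdealOn.1 ha T (by simpa [subset_insert_iff, hj] using hT) hTe)

lemma starSum_le_insert (j : ι) : starSum f e U ≤ starSum f (e + 1) (insert j U) :=
  sup_le_sup (starIdealOn_le_insert j) (Ideal.pow_right_mono (starIdealOn_le_insert j) 2)

lemma mul_sq_mem_starSum_insert {a : R} (ha : a ∈ starSum f e U) :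
    a * f j ^ 2 ∈ starSum f e (insert j U) := by
  obtain ⟨b, hb, c, hc, rfl⟩ := Submodule.mem_sup.1 ha
  rw [add_mul]
  refine add_mem (Ideal.mem_sup_left ?_) (Ideal.mem_sup_right ?_)
  · rw [sq, ← mul_assoc]
    exact Ideal.mul_mem_right _ _ (mul_mem_starIdealOn_insert hb)
  · have hle : starIdealOn f (e + 1) U * Ideal.span {f j} ≤
        starIdealOn f (e + 1) (insert j U) :=
      Ideal.mul_le.2 fun a ha b hb => by
        obtain ⟨r, rfl⟩ := Ideal.mem_span_singleton'.1 hb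
        rw [mul_left_comm]
        exact Ideal.mul_mem_left _ _ (mul_mem_starIdealOn_insert ha)
    refine Ideal.pow_right_mono hle 2 ?_
    rw [mul_pow, Ideal.span_singleton_pow]
    exact Ideal.mul_mem_mul hc (Ideal.mem_span_singleton_self _)

namespace IsRegularUpTo

variable (hf : IsRegularUpTo f k)
include hf

theorem mem_sq_sup_of_mul_mem {g : ι} (hTW : Disjoint T W) (hgT : g ∉ T) (hgW : g ∉ W)
    (hk : #T + #W < k) {z : R} (hz : z * f g ∈ genIdeal f T ^ 2 ⊔ genIdeal f W) :
    z ∈ genIdeal f T ^ 2 ⊔ genIdeal f W := by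
  induction T using Finset.induction_on generalizing W g z with
  | empty =>
    simp only [genIdeal_empty, sq, Ideal.mul_bot, bot_sup_eq, card_empty, zero_add] at hz hk ⊢
    exact hf W hk g hgW z hz
  | insert t T ht ih =>
    rw [disjoint_insert_left] at hTW
    rw [mem_insert, not_or] at hgT
    rw [card_insert_of_notMem ht] at hk
    set J := genIdeal f T ^ 2 ⊔ genIdeal f W
    have hTt : genIdeal f T ≤ genIdeal f (insert t T) := genIdeal_mono (subset_insert t T)
    obtain ⟨c, hc, hzc⟩ := exists_sub_mul_mem_of_mem_sq_insert hz
    obtain ⟨β, hβ⟩ : ∃ β, z - β * f t ∈ J := mem_sup_genIdeal_insert_iff.1 <|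
      ih (disjoint_insert_right.2 ⟨ht, hTW.2⟩) hgT.2 (by simp [hgW, hgT.1])
        (by rw [card_insert_of_notMem hTW.1]; omega) (mem_sup_genIdeal_insert_iff.2 ⟨c, hzc⟩)
    have hβc : β * f g - c ∈ J := by
      refine ih hTW.2 ht hTW.1 (by omega) ?_
      rw [show (β * f g - c) * f t = z * f g - c * f t - (z - β * f t) * f g by ring]
      exact J.sub_mem hzc (J.mul_mem_right (f g) hβ)
    have hβ' : β ∈ genIdeal f (insert t T) ⊔ genIdeal f W := by
      rw [← genIdeal_union]
      refine hf _ ?_ g (by simp [hgW, hgT.1, hgT.2]) β ?_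
      · rw [card_union_of_disjoint (disjoint_insert_left.2 hTW), card_insert_of_notMem ht]; omega
      rw [genIdeal_union, ← sub_add_cancel (β * f g) c]
      exact add_mem (mem_sup_mono_left ((Ideal.pow_le_self two_ne_zero).trans hTt) hβc)
        (Ideal.mem_sup_left hc)
    rw [← sub_add_cancel z (β * f t)]
    exact add_mem (mem_sup_mono_left (Ideal.pow_right_mono hTt 2) hβ)
      (mul_mem_sq_sup_of_mem_sup hβ' (mem_insert_self t T))

theorem mem_sq_sup_of_forall_erase {S : Finset ι} (hS : S.Nonempty) (hSW : Disjoint S W)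
    (hk : #S + #W ≤ k) (hx : ∀ i ∈ S, x ∈ genIdeal f (S.erase i) ⊔ genIdeal f W) :
    x ∈ genIdeal f S ^ 2 ⊔ genIdeal f W := by
  induction S using Finset.induction_on generalizing W x with
  | empty => exact absurd hS (by simp)
  | insert l S hl ih =>
    rw [disjoint_insert_left] at hSW
    rw [card_insert_of_notMem hl] at hk
    rcases S.eq_empty_or_nonempty with rfl | hS
    · exact Ideal.mem_sup_right (by simpa using hx l (mem_insert_self l ∅))
    have hSl : genIdeal f S ≤ genIdeal f (insert l S) := genIdeal_mono (subset_insert l S)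
    obtain ⟨r, hr⟩ := mem_sup_genIdeal_insert_iff.1 <|
      ih hS (disjoint_insert_right.2 ⟨hl, hSW.2⟩) (by rw [card_insert_of_notMem hSW.1]; omega)
        fun i hi => by
          rw [← genIdeal_insert_sup, ← erase_insert_of_ne (ne_of_mem_of_not_mem hi hl).symm]
          exact hx i (mem_insert_of_mem hi)
    have hrl : r ∈ genIdeal f S ⊔ genIdeal f W := by
      rw [← genIdeal_union]
      refine hf _ ((card_union_le _ _).trans_lt (by omega)) l (by simp [hl, hSW.1]) r ?_
      have hxl := hx l (mem_insert_self l S)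
      rw [erase_insert hl] at hxl
      rw [genIdeal_union, ← sub_sub_cancel x (r * f l)]
      exact sub_mem hxl (mem_sup_mono_left (Ideal.pow_le_self two_ne_zero) hr)
    rw [← sub_add_cancel x (r * f l)]
    exact add_mem (mem_sup_mono_left (Ideal.pow_right_mono hSl 2) hr)
      (mul_mem_sq_sup_of_mem_sup (mem_sup_mono_left hSl hrl) (mem_insert_self l S))

theorem starIdealOn_le_sq (hT : T ⊆ U) (he : e + 1 ≤ #T) (hk : #T ≤ k) :
    starIdealOn f e U ≤ genIdeal f T ^ 2 := by
  intro x hx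
  simpa using hf.mem_sq_sup_of_forall_erase (W := ∅) (card_pos.1 (by omega))
    (disjoint_empty_right T) (by simpa using hk) fun i hi => by
      simpa using starIdealOn_le_genIdeal ((erase_subset i T).trans hT)
        (by rw [card_erase_of_mem hi]; omega) hx

theorem starSum_le_sq (hT : T ⊆ U) (he : e + 1 ≤ #T) (hk : #T ≤ k) :
    starSum f e U ≤ genIdeal f T ^ 2 :=
  sup_le (hf.starIdealOn_le_sq hT he hk) (Ideal.pow_right_mono (starIdealOn_le_genIdeal hT he) 2)

theorem mem_starIdealOn_sup_of_forall (hUW : Disjoint U W) (hk : e + #W < k)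
    (hx : ∀ T ⊆ U, #T = e → x ∈ genIdeal f T ⊔ genIdeal f W) :
    x ∈ starIdealOn f e U ⊔ genIdeal f W := by
  induction U using Finset.induction_on generalizing e W x with
  | empty =>
    rcases e with _ | e
    · exact Ideal.mem_sup_right (by simpa using hx ∅ (empty_subset _) rfl)
    · rw [starIdealOn_eq_top (by simp)]
      exact Ideal.mem_sup_left Submodule.mem_top
  | insert l U hl ih =>
    rcases e with _ | e
    · exact Ideal.mem_sup_right (by simpa using hx ∅ (empty_subset _) rfl)
    rw [disjoint_insert_left] at hUW
    have hA : x ∈ starIdealOn f (e + 1) U ⊔ genIdeal f W :=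
      ih hUW.2 hk fun T hT hTe => hx T (hT.trans (subset_insert l U)) hTe
    obtain ⟨s, hs⟩ := mem_sup_genIdeal_insert_iff.1 <|
      ih (e := e) (disjoint_insert_right.2 ⟨hl, hUW.2⟩)
        (by rw [card_insert_of_notMem hUW.1]; omega)
        fun T hT hTe => by
          rw [← genIdeal_insert_sup]
          exact hx _ (insert_subset_insert l hT) (by rw [card_insert_of_notMem (hl <| hT ·), hTe])
    have hs' : s ∈ starIdealOn f (e + 1) U ⊔ genIdeal f W := ih hUW.2 hk fun T hT hTe => by
      rw [← genIdeal_union]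
      refine hf _ ((card_union_le _ _).trans_lt (by omega)) l
        (by simpa [hUW.1] using (hl <| hT ·)) s ?_
      rw [genIdeal_union, ← sub_sub_cancel x (s * f l)]
      exact sub_mem (mem_sup_mono_left (starIdealOn_le_genIdeal hT hTe.ge) hA)
        (mem_sup_mono_left (starIdealOn_le_genIdeal hT (by omega)) hs)
    rw [← sub_add_cancel x (s * f l)]
    exact add_mem (mem_sup_mono_left (starIdealOn_le_insert l) hs)
      (mul_mem_sup_of_mem_sup hs' fun _ hb => mul_mem_starIdealOn_insert hb)

theorem mul_mem_starSum_insert_sup (hjU : j ∉ U) (hjW : j ∉ W) (hUW : Disjoint U W)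
    (hk : e + 1 + #W < k)
    (ihU : ∀ y, (∀ S ⊆ U, #S = e + 1 → y ∈ genIdeal f S ^ 2 ⊔ genIdeal f W) →
      y ∈ starSum f e U ⊔ genIdeal f W)
    {ρ : R} (hρI : ρ ∈ starIdealOn f e U ⊔ genIdeal f (insert j W))
    (hρS : ∀ S ⊆ U, #S = e + 1 → ρ ∈ genIdeal f S ^ 2 ⊔ genIdeal f W) :
    ρ * f j ∈ starSum f e (insert j U) ⊔ genIdeal f W := by
  obtain ⟨σ, hσ⟩ := mem_sup_genIdeal_insert_iff.1 hρI
  have hσ' : σ ∈ starSum f e U ⊔ genIdeal f W := ihU σ fun S hS hSe => by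
    refine hf.mem_sq_sup_of_mul_mem (hUW.mono_left hS) (hjU <| hS ·) hjW (by omega) ?_
    rw [← sub_sub_cancel ρ (σ * f j)]
    exact sub_mem (hρS S hS hSe)
      (mem_sup_mono_left (hf.starIdealOn_le_sq hS hSe.ge (by omega)) hσ)
  rw [show ρ * f j = (ρ - σ * f j) * f j + σ * f j ^ 2 by ring]
  exact add_mem
    (mul_mem_sup_of_mem_sup hσ fun _ hb => Ideal.mem_sup_left (mul_mem_starIdealOn_insert hb))
    (mul_mem_sup_of_mem_sup hσ' fun _ hb => mul_sq_mem_starSum_insert hb)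

theorem mem_starSum_insert_sup (hjU : j ∉ U) (hjW : j ∉ W) (hUW : Disjoint U W)
    (hk : e + 1 + #W < k)
    (ihU : ∀ y, (∀ S ⊆ U, #S = e + 1 → y ∈ genIdeal f S ^ 2 ⊔ genIdeal f W) →
      y ∈ starSum f e U ⊔ genIdeal f W)
    {w ρ : R} (hw : w ∈ starSum f e (insert j U))
    (hρ : ρ ∈ starIdealOn f e U ⊔ genIdeal f (insert j W))
    (hxw : x - w - ρ * f j ∈ genIdeal f W)
    (hx : ∀ S ⊆ U, #S = e + 1 → x ∈ genIdeal f S ^ 2 ⊔ genIdeal f W) :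
    x ∈ starSum f e (insert j U) ⊔ genIdeal f W := by
  have hρj := hf.mul_mem_starSum_insert_sup hjU hjW hUW hk ihU hρ fun S hS hSe => by
    refine hf.mem_sq_sup_of_mul_mem (hUW.mono_left hS) (hjU <| hS ·) hjW (by omega) ?_
    rw [show ρ * f j = x - w - (x - w - ρ * f j) by ring]
    have hwS := hf.starSum_le_sq (hS.trans (subset_insert j U)) hSe.ge (by omega) hw
    exact sub_mem (sub_mem (hx S hS hSe) (Ideal.mem_sup_left hwS)) (Ideal.mem_sup_right hxw)
  rw [show x = w + ρ * f j + (x - w - ρ * f j) by ring]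
  exact add_mem (add_mem (Ideal.mem_sup_left hw) hρj) (Ideal.mem_sup_right hxw)

theorem mem_starIdealOn_sup_insert (hjU : j ∉ U) (hjW : j ∉ W) (hUW : Disjoint U W)
    (hk : e + 1 + 1 + #W < k) {w ρ : R} (hw : w ∈ starSum f e U)
    (hxw : x - w - ρ * f j ∈ genIdeal f W)
    (hx : ∀ S ⊆ insert j U, #S = e + 1 + 1 → x ∈ genIdeal f S ^ 2 ⊔ genIdeal f W) :
    ρ ∈ starIdealOn f (e + 1) U ⊔ genIdeal f (insert j W) := by
  refine hf.mem_starIdealOn_sup_of_forall (disjoint_insert_right.2 ⟨hjU, hUW⟩)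
    (by rw [card_insert_of_notMem hjW]; omega) fun T hT hTe => ?_
  have hjT : j ∉ T := (hjU <| hT ·)
  obtain ⟨c, hc, hxc⟩ := exists_sub_mul_mem_of_mem_sq_insert
    (hx _ (insert_subset_insert j hT) (by rw [card_insert_of_notMem hjT, hTe]))
  have hρc : ρ - c ∈ genIdeal f T ^ 2 ⊔ genIdeal f W := by
    refine hf.mem_sq_sup_of_mul_mem (hUW.mono_left hT) hjT hjW (by omega) ?_
    rw [show (ρ - c) * f j = x - c * f j - w - (x - w - ρ * f j) by ring]
    have hwT := hf.starSum_le_sq hT hTe.ge (by omega) hw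
    exact sub_mem (sub_mem hxc (Ideal.mem_sup_left hwT)) (Ideal.mem_sup_right hxw)
  rw [← genIdeal_insert_sup, ← sub_add_cancel ρ c]
  exact add_mem (mem_sup_mono_left ((Ideal.pow_le_self two_ne_zero).trans
    (genIdeal_mono (subset_insert j T))) hρc) (Ideal.mem_sup_left hc)

theorem mem_starSum_sup (hUW : Disjoint U W) (hk : e + 1 + #W < k)
    (hx : ∀ S ⊆ U, #S = e + 1 → x ∈ genIdeal f S ^ 2 ⊔ genIdeal f W) :
    x ∈ starSum f e U ⊔ genIdeal f W := by
  induction e using Nat.strong_induction_on generalizing U W x with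
  | _ e ihe =>
  induction U using Finset.induction_on generalizing W x with
  | empty =>
    simp [starSum, starIdealOn_eq_top (f := f) (e := e + 1) (U := ∅) (by simp), Ideal.top_pow]
  | insert j U hjU ih =>
    rw [disjoint_insert_left] at hUW
    obtain ⟨w, ρ, hw, hρ, hxw⟩ : ∃ w ρ, w ∈ starSum f e (insert j U) ∧
        ρ ∈ starIdealOn f e U ⊔ genIdeal f (insert j W) ∧
        x - w - ρ * f j ∈ genIdeal f W := by
      rcases e with _ | e
      · have hxj := hx {j} (by simp) (by simp)
        rw [genIdeal_singleton, Ideal.span_singleton_pow] at hxj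
        obtain ⟨a, b, hb, rfl⟩ := Ideal.mem_span_singleton_sup.1 hxj
        refine ⟨0, a * f j, zero_mem _, Ideal.mem_sup_right ?_, ?_⟩
        · exact Ideal.mul_mem_left _ _ (mem_genIdeal (mem_insert_self j W))
        · simpa [sq, mul_assoc] using hb
      · obtain ⟨ρ, hρ⟩ := mem_sup_genIdeal_insert_iff.1 <| ihe e (by omega)
          (disjoint_insert_right.2 ⟨hjU, hUW.2⟩) (by rw [card_insert_of_notMem hUW.1]; omega)
          fun S hS hSe => sq_genIdeal_insert_sup_le j S W
            (hx _ (insert_subset_insert j hS) (by rw [card_insert_of_notMem (hjU <| hS ·), hSe]))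
        obtain ⟨w, hw, v, hv, hwv⟩ := Submodule.mem_sup.1 hρ
        have hxw : x - w - ρ * f j ∈ genIdeal f W := by
          rwa [sub_right_comm, ← hwv, add_sub_cancel_left]
        exact ⟨w, ρ, starSum_le_insert j hw,
          hf.mem_starIdealOn_sup_insert hjU hUW.1 hUW.2 hk hw hxw hx, hxw⟩
    exact hf.mem_starSum_insert_sup hjU hUW.1 hUW.2 hk (fun _ => ih hUW.2 hk) hw hρ hxw
      fun S hS => hx S (hS.trans (subset_insert j U))

end IsRegularUpTo

theorem IsRegularUpTo.iInf_sq_genIdeal_eq_starSum (hf : IsRegularUpTo f (e + 2))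
    (U : Finset ι) :
    ⨅ (S : Finset ι) (_ : S ⊆ U) (_ : #S = e + 1), genIdeal f S ^ 2 = starSum f e U := by
  refine le_antisymm (fun x hx => ?_) (le_iInf₂ fun S hS => le_iInf fun hSe =>
    hf.starSum_le_sq hS hSe.ge (by omega))
  simp only [Submodule.mem_iInf] at hx
  simpa using hf.mem_starSum_sup (disjoint_empty_right U) (by simp) fun S hS hSe => by
    simpa using hx S hS hSe

end StarConfiguration

open StarConfiguration

theorem star_symbolic_square_decomposition_general (k : Type*) [Field k] (n s c : ℕ)
    (hc : 2 ≤ c)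
    (F : Fin s → MvPolynomial (Fin (n + 1)) k)
    (hreg : ∀ L : List (Fin s), L.Nodup → L.length ≤ c + 1 →
      RingTheory.Sequence.IsRegular (MvPolynomial (Fin (n + 1)) k) (L.map F)) :
    starSymb F c 2 = starIdeal F (c - 1) + starIdeal F c ^ 2 := by
  obtain ⟨e, rfl⟩ : ∃ e, c = e + 1 := ⟨c - 1, by omega⟩
  have hf : IsRegularUpTo F (e + 2) :=
    isRegularUpTo_of_isWeaklyRegular fun L hL hlen => (hreg L hL hlen).toIsWeaklyRegular
  have hstar (d : ℕ) : starIdeal F d = starIdealOn F d univ := by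
    simp [starIdeal, starIdealOn, genIdeal]
  rw [add_tsub_cancel_right, hstar, hstar, Ideal.add_eq_sup, ← starSum,
    ← hf.iInf_sq_genIdeal_eq_starSum univ]
  simp [starSymb, genIdeal]

theorem star_symbolic_square_decomposition (k : Type*) [Field k] (n s c : ℕ)
    (hc : 2 ≤ c) (hcn : c ≤ n) (hcs : c ≤ s)
    (F : Fin s → MvPolynomial (Fin (n + 1)) k)
    (hF : ∀ i, ∃ d, 0 < d ∧ (F i).IsHomogeneous d)
    (hreg : ∀ L : List (Fin s), L.Nodup → L.length ≤ c + 1 →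
      RingTheory.Sequence.IsRegular (MvPolynomial (Fin (n + 1)) k) (L.map F)) :
    starSymb F c 2 = starIdeal F (c - 1) + starIdeal F c ^ 2 :=
  star_symbolic_square_decomposition_general k n s c hc F hreg
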